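/- Let n = 2m, let t be a non-negative integer, let K = { y ∈ F_{2^n} : y^{2^m} = y } be the subfield F_{2^m}, let π : K → K be a bijection with inverse π^{-1}, let g : K → F_2, and let λ ∈ F_{2^n} with λ ∉ K. Let ω ∈ F_{2^n} satisfy ω + ω^{2^m} = 1, set Λ = λ + λ^{2^m} (so Λ ∈ K, Λ ≠ 0), and define G : K → F_2 by G(z) = Tr(λ (ω z)^{2^t} π(z)) + g(z). Then the bent function f(x) = Tr(λ x^{2^t} π(x + x^{2^m})) + g(x + x^{2^m}) has dual f*(x) = Tr( ω x · π^{-1}( Λ^{-1} (x + x^{2^m})^{2^t} ) ) + G( π^{-1}( Λ^{-1} (x + x^{2^m})^{2^t} ) ). (Note Λ^{-1}(x + x^{2^m})^{2^t} ∈ K for every x ∈ F_{2^n}.) -/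
import Mathlib


noncomputable section
open scoped Classical

noncomputable instance (n : ℕ) : Fintype (GaloisField 2 n) := Fintype.ofFinite _

/-- `(-1)^c` for `c ∈ F_2`. -/
def sgn (c : ZMod 2) : ℤ := if c = 0 then 1 else -1

/-- The absolute trace `Tr : F_{2^n} → F_2`. -/
def Tr {n : ℕ} (x : GaloisField 2 n) : ZMod 2 :=
  Algebra.trace (ZMod 2) (GaloisField 2 n) x

/-- Walsh–Hadamard transform of a Boolean function on `F_{2^n}`. -/
def walsh {n : ℕ} (f : GaloisField 2 n → ZMod 2) (μ : GaloisField 2 n) : ℤ :=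
  ∑ x : GaloisField 2 n, sgn (f x + Tr (μ * x))

/-- `f` is bent (where `n = 2m`): all Walsh coefficients are `±2^m`. -/
def IsBent {n : ℕ} (m : ℕ) (f : GaloisField 2 n → ZMod 2) : Prop :=
  ∀ μ, walsh f μ = 2 ^ m ∨ walsh f μ = -(2 ^ m)

/-- `fs` is the dual of the bent function `f` (where `n = 2m`). -/
def IsDualOf {n : ℕ} (m : ℕ) (fs f : GaloisField 2 n → ZMod 2) : Prop :=
  ∀ μ, walsh f μ = 2 ^ m * sgn (fs μ)


lemma sgn_add : ∀ a b : ZMod 2, sgn (a + b) = sgn a * sgn b := by decide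

lemma Tr_add {n : ℕ} (x y : GaloisField 2 n) : Tr (x + y) = Tr x + Tr y := map_add _ _ _

lemma cardF {n : ℕ} (hn : n ≠ 0) : Fintype.card (GaloisField 2 n) = 2 ^ n := by
  rw [← Nat.card_eq_fintype_card, GaloisField.card 2 n hn]

lemma pow_cardF {n : ℕ} (hn : n ≠ 0) (x : GaloisField 2 n) : x ^ (2 ^ n) = x := by
  rw [← cardF hn]; exact FiniteField.pow_card x

lemma Tr_sq {n : ℕ} (x : GaloisField 2 n) : Tr (x ^ 2) = Tr x := by
  have hinj : Function.Injective (algebraMap (ZMod 2) (GaloisField 2 n)) :=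
    (algebraMap (ZMod 2) (GaloisField 2 n)).injective
  apply hinj
  calc algebraMap (ZMod 2) (GaloisField 2 n) (Tr (x ^ 2))
      = ∑ σ : GaloisField 2 n ≃ₐ[ZMod 2] GaloisField 2 n, σ (x ^ 2) :=
        trace_eq_sum_automorphisms _
    _ = ∑ σ : GaloisField 2 n ≃ₐ[ZMod 2] GaloisField 2 n, (σ x) ^ 2 := by
        exact Finset.sum_congr rfl fun σ _ => map_pow σ x 2
    _ = (∑ σ : GaloisField 2 n ≃ₐ[ZMod 2] GaloisField 2 n, σ x) ^ 2 := (sum_pow_char _ _ _).symm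
    _ = (algebraMap (ZMod 2) (GaloisField 2 n) (Tr x)) ^ 2 := by
        rw [Tr, trace_eq_sum_automorphisms]
    _ = algebraMap (ZMod 2) (GaloisField 2 n) ((Tr x) ^ 2) := (map_pow _ _ _).symm
    _ = algebraMap (ZMod 2) (GaloisField 2 n) (Tr x) := by rw [ZMod.pow_card]

lemma Tr_pow2 {n : ℕ} (k : ℕ) (x : GaloisField 2 n) : Tr (x ^ 2 ^ k) = Tr x := by
  induction k with
  | zero => simp
  | succ k ih => rw [pow_succ, pow_mul, Tr_sq, ih]

lemma pow_card_mul {n : ℕ} (hn : n ≠ 0) (k : ℕ) (x : GaloisField 2 n) :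
    x ^ 2 ^ (n * k) = x := by
  induction k with
  | zero => simp
  | succ k ih => rw [Nat.mul_succ, pow_add, pow_mul, ih, pow_cardF hn]

lemma sgn_add_one : ∀ a : ZMod 2, sgn (a + 1) = - sgn a := by decide

lemma ne_zero_eq_one : ∀ c : ZMod 2, c ≠ 0 → c = 1 := by decide

lemma sum_sgn_zero {n : ℕ} {a : GaloisField 2 n} (ha : a ≠ 0) :
    ∑ x : GaloisField 2 n, sgn (Tr (a * x)) = 0 := by
  obtain ⟨w, hw⟩ : ∃ w : GaloisField 2 n, Tr w ≠ 0 := by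
    by_contra h
    push_neg at h
    exact Algebra.trace_ne_zero (ZMod 2) (GaloisField 2 n)
      (LinearMap.ext fun x => h x)
  have hw1 : Tr w = 1 := ne_zero_eq_one _ hw
  set c := a⁻¹ * w with hc
  have key : ∑ x : GaloisField 2 n, sgn (Tr (a * x)) =
      ∑ x : GaloisField 2 n, sgn (Tr (a * (x + c))) := by
    exact Fintype.sum_equiv (Equiv.subRight c) _ _ (fun x => by simp)
  have h2 : ∀ x : GaloisField 2 n, sgn (Tr (a * (x + c))) = - sgn (Tr (a * x)) := by
    intro x
    rw [mul_add, Tr_add, hc, mul_inv_cancel_left₀ ha, hw1, sgn_add_one]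
  rw [Finset.sum_congr rfl (fun x _ => h2 x), Finset.sum_neg_distrib] at key
  omega

lemma sum_sgn {n : ℕ} (hn : n ≠ 0) (a : GaloisField 2 n) :
    ∑ x : GaloisField 2 n, sgn (Tr (a * x)) = if a = 0 then 2 ^ n else 0 := by
  classical
  split_ifs with h
  · subst h
    simp only [zero_mul]
    have : Tr (0 : GaloisField 2 n) = 0 := map_zero _
    rw [this]
    simp [sgn, Finset.card_univ, cardF hn]
  · exact sum_sgn_zero h

section Kstuff

variable {n m : ℕ}

lemma two_zero : (2 : GaloisField 2 n) = 0 := by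
  have : CharP (GaloisField 2 n) 2 := inferInstance
  exact CharTwo.two_eq_zero

lemma omega_q (hn : n = 2 * m) (ω : GaloisField 2 n) (hω : ω + ω ^ 2 ^ m = 1) :
    ω ^ 2 ^ m = 1 + ω := by
  linear_combination hω - ω * (two_zero (n := n))

lemma qq_eq (hn : n = 2 * m) : (2:ℕ) ^ m * 2 ^ m = 2 ^ n := by
  rw [hn, two_mul, pow_add]

lemma pow_qq (hn : n = 2 * m) (hm : m ≠ 0) (x : GaloisField 2 n) :
    (x ^ 2 ^ m) ^ 2 ^ m = x := by
  rw [← pow_mul, qq_eq hn, pow_cardF (by omega : n ≠ 0)]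

lemma mem_K_T (hn : n = 2 * m) (hm : m ≠ 0) (x : GaloisField 2 n) :
    (x + x ^ 2 ^ m) ^ 2 ^ m = x + x ^ 2 ^ m := by
  rw [add_pow_char_pow, pow_qq hn hm, add_comm]

lemma T_beta (hn : n = 2 * m) (hm : m ≠ 0) (ω : GaloisField 2 n) (hω : ω + ω ^ 2 ^ m = 1)
    {z u : GaloisField 2 n} (hz : z ^ 2 ^ m = z) (hu : u ^ 2 ^ m = u) :
    (ω * z + u) + (ω * z + u) ^ 2 ^ m = z := by
  rw [add_pow_char_pow, mul_pow, hz, hu, omega_q hn ω hω]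
  linear_combination (ω * z + u) * (two_zero (n := n))

def Kequiv (hn : n = 2 * m) (hm : m ≠ 0) (ω : GaloisField 2 n) (hω : ω + ω ^ 2 ^ m = 1) :
    ({y : GaloisField 2 n // y ^ 2 ^ m = y} × {y : GaloisField 2 n // y ^ 2 ^ m = y}) ≃
      GaloisField 2 n where
  toFun p := ω * p.1.1 + p.2.1
  invFun x := (⟨x + x ^ 2 ^ m, mem_K_T hn hm x⟩,
    ⟨x + ω * (x + x ^ 2 ^ m), by
      rw [add_pow_char_pow, mul_pow, mem_K_T hn hm, omega_q hn ω hω]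
      linear_combination (x ^ 2 ^ m) * (two_zero (n := n))⟩)
  left_inv := by
    rintro ⟨⟨z, hz⟩, ⟨u, hu⟩⟩
    have h1 : (ω * z + u) + (ω * z + u) ^ 2 ^ m = z := T_beta hn hm ω hω hz hu
    ext
    · exact h1
    · show (ω * z + u) + ω * ((ω * z + u) + (ω * z + u) ^ 2 ^ m) = u
      rw [h1]
      linear_combination (ω * z) * (two_zero (n := n))
  right_inv := by
    intro x
    show ω * (x + x ^ 2 ^ m) + (x + ω * (x + x ^ 2 ^ m)) = x
    linear_combination (ω * (x + x ^ 2 ^ m)) * (two_zero (n := n))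

lemma card_K_le (hm : m ≠ 0) :
    Fintype.card {y : GaloisField 2 n // y ^ 2 ^ m = y} ≤ 2 ^ m := by
  classical
  set P : Polynomial (GaloisField 2 n) := Polynomial.X ^ 2 ^ m - Polynomial.X with hP
  have h1m : 1 < 2 ^ m := Nat.one_lt_two_pow_iff.mpr hm
  have hPm : P.Monic := Polynomial.monic_X_pow_sub (by
    rw [Polynomial.degree_X]
    exact_mod_cast h1m)
  have hP0 : P ≠ 0 := hPm.ne_zero
  have hdeg : P.natDegree = 2 ^ m := by
    rw [hP, Polynomial.natDegree_sub_eq_left_of_natDegree_lt, Polynomial.natDegree_X_pow]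
    rw [Polynomial.natDegree_X, Polynomial.natDegree_X_pow]
    exact h1m
  rw [Fintype.card_subtype]
  calc (Finset.univ.filter fun y : GaloisField 2 n => y ^ 2 ^ m = y).card
      ≤ P.roots.toFinset.card := by
        apply Finset.card_le_card
        intro y hy
        rw [Multiset.mem_toFinset, Polynomial.mem_roots hP0]
        simp only [Polynomial.IsRoot, hP, Polynomial.eval_sub, Polynomial.eval_pow,
          Polynomial.eval_X, sub_eq_zero]
        exact (Finset.mem_filter.mp hy).2
    _ ≤ Multiset.card P.roots := Multiset.toFinset_card_le _
    _ ≤ P.natDegree := Polynomial.card_roots' P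
    _ = 2 ^ m := hdeg

lemma card_K (hn : n = 2 * m) (hm : m ≠ 0) (ω : GaloisField 2 n) (hω : ω + ω ^ 2 ^ m = 1) :
    Fintype.card {y : GaloisField 2 n // y ^ 2 ^ m = y} = 2 ^ m := by
  have hsq : Fintype.card {y : GaloisField 2 n // y ^ 2 ^ m = y} *
      Fintype.card {y : GaloisField 2 n // y ^ 2 ^ m = y} = 2 ^ m * 2 ^ m := by
    have h := Fintype.card_congr (Kequiv hn hm ω hω)
    rw [Fintype.card_prod] at h
    rw [h, cardF (by omega : n ≠ 0), ← qq_eq hn]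
  have hle := card_K_le (n := n) hm
  rcases lt_or_eq_of_le hle with h | h
  · exfalso
    have := Nat.mul_lt_mul_of_lt_of_le h hle (by positivity)
    omega
  · exact h

end Kstuff

section F4

variable {n m : ℕ}

lemma Tr_twist (hn : n = 2 * m) (hm : m ≠ 0) (b x : GaloisField 2 n) :
    Tr (b * (x + x ^ 2 ^ m)) = Tr ((b + b ^ 2 ^ m) * x) := by
  have h1 : Tr (b * x ^ 2 ^ m) = Tr (b ^ 2 ^ m * x) := by
    have h2 := Tr_pow2 m (b * x ^ 2 ^ m)
    rw [mul_pow, pow_qq hn hm] at h2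
    exact h2.symm
  rw [mul_add, Tr_add, add_mul, Tr_add, h1]

lemma sum_sgn_K (hn : n = 2 * m) (hm : m ≠ 0) (ω : GaloisField 2 n)
    (hω : ω + ω ^ 2 ^ m = 1) (b : GaloisField 2 n) :
    ∑ y : {y : GaloisField 2 n // y ^ 2 ^ m = y}, sgn (Tr (b * y.1)) =
      if b + b ^ 2 ^ m = 0 then 2 ^ m else 0 := by
  classical
  have key : ∑ x : GaloisField 2 n, sgn (Tr (b * (x + x ^ 2 ^ m))) =
      if b + b ^ 2 ^ m = 0 then (2 : ℤ) ^ n else 0 := by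
    rw [Finset.sum_congr rfl fun x _ => by rw [Tr_twist hn hm b x]]
    exact sum_sgn (by omega) _
  have key2 : ∑ x : GaloisField 2 n, sgn (Tr (b * (x + x ^ 2 ^ m))) =
      (2 : ℤ) ^ m * ∑ y : {y : GaloisField 2 n // y ^ 2 ^ m = y}, sgn (Tr (b * y.1)) := by
    rw [← Equiv.sum_comp (Kequiv hn hm ω hω) (fun x => sgn (Tr (b * (x + x ^ 2 ^ m))))]
    have hpt : ∀ p : ({y : GaloisField 2 n // y ^ 2 ^ m = y} ×
        {y : GaloisField 2 n // y ^ 2 ^ m = y}),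
        sgn (Tr (b * (Kequiv hn hm ω hω p + (Kequiv hn hm ω hω p) ^ 2 ^ m))) =
        sgn (Tr (b * p.1.1)) := by
      rintro ⟨⟨z, hz⟩, ⟨u, hu⟩⟩
      have : (Kequiv hn hm ω hω (⟨z, hz⟩, ⟨u, hu⟩)) = ω * z + u := rfl
      rw [this, T_beta hn hm ω hω hz hu]
    rw [Finset.sum_congr rfl fun p _ => hpt p, Fintype.sum_prod_type]
    simp only [Finset.sum_const, Finset.card_univ, card_K hn hm ω hω, nsmul_eq_mul]
    rw [← Finset.mul_sum]
    norm_num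
  rw [key2] at key
  have h2m : ((2 : ℤ) ^ m) ≠ 0 := by positivity
  split_ifs at key ⊢ with h
  · apply mul_left_cancel₀ h2m
    rw [key, hn, two_mul, pow_add]
  · apply mul_left_cancel₀ h2m
    rw [key, mul_zero]

end F4

lemma main {n m : ℕ} (hn : n = 2 * m) (hm : m ≠ 0) (t : ℕ)
    (π πinv : GaloisField 2 n → GaloisField 2 n)
    (hπ : Set.BijOn π {y : GaloisField 2 n | y ^ (2 ^ m) = y}
      {y : GaloisField 2 n | y ^ (2 ^ m) = y})
    (hπinv : Set.InvOn πinv π {y : GaloisField 2 n | y ^ (2 ^ m) = y}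
      {y : GaloisField 2 n | y ^ (2 ^ m) = y})
    (g : GaloisField 2 n → ZMod 2)
    (lam : GaloisField 2 n) (hlam : lam ^ (2 ^ m) ≠ lam)
    (ω : GaloisField 2 n) (hω : ω + ω ^ (2 ^ m) = 1) (μ : GaloisField 2 n) :
    walsh (fun x => Tr (lam * x ^ (2 ^ t) * π (x + x ^ (2 ^ m))) + g (x + x ^ (2 ^ m))) μ =
      2 ^ m * sgn (Tr (ω * μ * πinv ((lam + lam ^ (2 ^ m))⁻¹ * (μ + μ ^ (2 ^ m)) ^ (2 ^ t))) +
        (Tr (lam * (ω * πinv ((lam + lam ^ (2 ^ m))⁻¹ * (μ + μ ^ (2 ^ m)) ^ (2 ^ t))) ^ (2 ^ t) *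
            π (πinv ((lam + lam ^ (2 ^ m))⁻¹ * (μ + μ ^ (2 ^ m)) ^ (2 ^ t)))) +
          g (πinv ((lam + lam ^ (2 ^ m))⁻¹ * (μ + μ ^ (2 ^ m)) ^ (2 ^ t))))) := by
  classical
  have hn0 : n ≠ 0 := by omega
  set rr := (n - 1) * t with hrr
  have htrr : t + rr = n * t := by
    have h1 : (n - 1) * t = n * t - t := by rw [Nat.sub_mul, one_mul]
    have h2 : t ≤ n * t := Nat.le_mul_of_pos_left t (by omega)
    omega
  have hpow1 : ∀ x : GaloisField 2 n, (x ^ 2 ^ t) ^ 2 ^ rr = x := by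
    intro x
    rw [← pow_mul, ← pow_add, htrr, pow_card_mul hn0]
  have hpow2 : ∀ x : GaloisField 2 n, (x ^ 2 ^ rr) ^ 2 ^ t = x := by
    intro x
    rw [← pow_mul, ← pow_add, Nat.add_comm, htrr, pow_card_mul hn0]
  have hchar2 : ∀ a b : GaloisField 2 n, a + b = 0 ↔ a = b := by
    intro a b
    constructor
    · intro h; linear_combination h - b * (two_zero (n := n))
    · intro h; rw [h]; linear_combination b * (two_zero (n := n))
  have hΛK : (lam + lam ^ 2 ^ m) ^ 2 ^ m = lam + lam ^ 2 ^ m := mem_K_T hn hm lam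
  have hΛ0 : lam + lam ^ 2 ^ m ≠ 0 := fun h =>
    hlam ((hchar2 lam (lam ^ 2 ^ m)).mp h).symm
  have hMK : (μ + μ ^ 2 ^ m) ^ 2 ^ m = μ + μ ^ 2 ^ m := mem_K_T hn hm μ
  have hw0K : ((lam + lam ^ 2 ^ m)⁻¹ * (μ + μ ^ 2 ^ m) ^ 2 ^ t) ^ 2 ^ m
      = (lam + lam ^ 2 ^ m)⁻¹ * (μ + μ ^ 2 ^ m) ^ 2 ^ t := by
    rw [mul_pow, inv_pow, hΛK, pow_right_comm, hMK]
  have hz0K : (πinv ((lam + lam ^ 2 ^ m)⁻¹ * (μ + μ ^ 2 ^ m) ^ 2 ^ t)) ^ 2 ^ m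
      = πinv ((lam + lam ^ 2 ^ m)⁻¹ * (μ + μ ^ 2 ^ m) ^ 2 ^ t) := by
    obtain ⟨z', hz'K, hπz'⟩ := hπ.2.2 hw0K
    have h7 : πinv ((lam + lam ^ 2 ^ m)⁻¹ * (μ + μ ^ 2 ^ m) ^ 2 ^ t) = z' := by
      rw [← hπz']
      exact hπinv.1 hz'K
    rw [h7]
    exact hz'K
  have hπz0 : π (πinv ((lam + lam ^ 2 ^ m)⁻¹ * (μ + μ ^ 2 ^ m) ^ 2 ^ t))
      = (lam + lam ^ 2 ^ m)⁻¹ * (μ + μ ^ 2 ^ m) ^ 2 ^ t := hπinv.2 hw0K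
  -- condition equivalence
  have hcond : ∀ z : GaloisField 2 n, z ^ 2 ^ m = z →
      ((((lam * π z) ^ 2 ^ rr + μ) + ((lam * π z) ^ 2 ^ rr + μ) ^ 2 ^ m = 0) ↔
        z = πinv ((lam + lam ^ 2 ^ m)⁻¹ * (μ + μ ^ 2 ^ m) ^ 2 ^ t)) := by
    intro z hz
    have hπzK : (π z) ^ 2 ^ m = π z := hπ.1 hz
    have e1 : ((lam * π z) ^ 2 ^ rr + μ) ^ 2 ^ m
        = (lam ^ 2 ^ m * π z) ^ 2 ^ rr + μ ^ 2 ^ m := by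
      rw [add_pow_char_pow, pow_right_comm, mul_pow, hπzK]
    rw [e1]
    have e2 : (lam * π z) ^ 2 ^ rr + μ + ((lam ^ 2 ^ m * π z) ^ 2 ^ rr + μ ^ 2 ^ m)
        = ((lam + lam ^ 2 ^ m) * π z) ^ 2 ^ rr + (μ + μ ^ 2 ^ m) := by
      rw [add_mul, add_pow_char_pow]
      ring
    rw [e2, hchar2]
    constructor
    · intro h
      have h3 : (lam + lam ^ 2 ^ m) * π z = (μ + μ ^ 2 ^ m) ^ 2 ^ t := by
        calc (lam + lam ^ 2 ^ m) * π z
            = (((lam + lam ^ 2 ^ m) * π z) ^ 2 ^ rr) ^ 2 ^ t := (hpow2 _).symm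
          _ = (μ + μ ^ 2 ^ m) ^ 2 ^ t := by rw [h]
      have h4 : π z = (lam + lam ^ 2 ^ m)⁻¹ * (μ + μ ^ 2 ^ m) ^ 2 ^ t := by
        rw [← h3, inv_mul_cancel_left₀ hΛ0]
      rw [← h4]
      exact (hπinv.1 hz).symm
    · intro h
      rw [h, hπz0, mul_inv_cancel_left₀ hΛ0, hpow1]
  -- pointwise splitting
  have hpt : ∀ z u : GaloisField 2 n, z ^ 2 ^ m = z → u ^ 2 ^ m = u →
      sgn ((Tr (lam * (ω * z + u) ^ 2 ^ t * π ((ω * z + u) + (ω * z + u) ^ 2 ^ m)) +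
          g ((ω * z + u) + (ω * z + u) ^ 2 ^ m)) + Tr (μ * (ω * z + u)))
      = sgn (Tr (lam * (ω * z) ^ 2 ^ t * π z) + g z + Tr (μ * (ω * z))) *
          sgn (Tr (((lam * π z) ^ 2 ^ rr + μ) * u)) := by
    intro z u hz hu
    rw [T_beta hn hm ω hω hz hu]
    have e3 : Tr (lam * (ω * z + u) ^ 2 ^ t * π z)
        = Tr (lam * (ω * z) ^ 2 ^ t * π z) + Tr ((lam * π z) ^ 2 ^ rr * u) := by
      have h5 : lam * (ω * z + u) ^ 2 ^ t * π z
          = lam * (ω * z) ^ 2 ^ t * π z + (lam * π z) * u ^ 2 ^ t := by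
        rw [add_pow_char_pow]; ring
      rw [h5, Tr_add]
      congr 1
      have h6 : (lam * π z) * u ^ 2 ^ t = (((lam * π z) ^ 2 ^ rr) * u) ^ 2 ^ t := by
        rw [mul_pow, hpow2]
      rw [h6, Tr_pow2]
    have e4 : Tr (μ * (ω * z + u)) = Tr (μ * (ω * z)) + Tr (μ * u) := by
      rw [← Tr_add]; congr 1; ring
    have e5 : Tr (((lam * π z) ^ 2 ^ rr + μ) * u)
        = Tr ((lam * π z) ^ 2 ^ rr * u) + Tr (μ * u) := by
      rw [← Tr_add]; congr 1; ring
    rw [e3, e4, e5, ← sgn_add]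
    congr 1
    ring
  -- the sum
  simp only [walsh]
  rw [← Equiv.sum_comp (Kequiv hn hm ω hω)
    (fun x => sgn ((Tr (lam * x ^ 2 ^ t * π (x + x ^ 2 ^ m)) + g (x + x ^ 2 ^ m)) + Tr (μ * x)))]
  have step2 : ∀ p : ({y : GaloisField 2 n // y ^ 2 ^ m = y} ×
      {y : GaloisField 2 n // y ^ 2 ^ m = y}),
      sgn ((Tr (lam * (Kequiv hn hm ω hω p) ^ 2 ^ t *
          π ((Kequiv hn hm ω hω p) + (Kequiv hn hm ω hω p) ^ 2 ^ m)) +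
          g ((Kequiv hn hm ω hω p) + (Kequiv hn hm ω hω p) ^ 2 ^ m)) +
          Tr (μ * (Kequiv hn hm ω hω p)))
      = sgn (Tr (lam * (ω * p.1.1) ^ 2 ^ t * π p.1.1) + g p.1.1 + Tr (μ * (ω * p.1.1))) *
          sgn (Tr (((lam * π p.1.1) ^ 2 ^ rr + μ) * p.2.1)) := by
    rintro ⟨⟨z, hz⟩, ⟨u, hu⟩⟩
    exact hpt z u hz hu
  rw [Finset.sum_congr rfl fun p _ => step2 p, Fintype.sum_prod_type]
  have step3 : ∀ z : {y : GaloisField 2 n // y ^ 2 ^ m = y},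
      ∑ u : {y : GaloisField 2 n // y ^ 2 ^ m = y},
        sgn (Tr (lam * (ω * z.1) ^ 2 ^ t * π z.1) + g z.1 + Tr (μ * (ω * z.1))) *
          sgn (Tr (((lam * π z.1) ^ 2 ^ rr + μ) * u.1))
      = if z = (⟨πinv ((lam + lam ^ 2 ^ m)⁻¹ * (μ + μ ^ 2 ^ m) ^ 2 ^ t), hz0K⟩ :
          {y : GaloisField 2 n // y ^ 2 ^ m = y}) then
          sgn (Tr (lam * (ω * z.1) ^ 2 ^ t * π z.1) + g z.1 + Tr (μ * (ω * z.1))) * 2 ^ m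
        else 0 := by
    intro z
    rw [← Finset.mul_sum, sum_sgn_K hn hm ω hω]
    by_cases hc : z.1 = πinv ((lam + lam ^ 2 ^ m)⁻¹ * (μ + μ ^ 2 ^ m) ^ 2 ^ t)
    · rw [if_pos ((hcond z.1 z.2).mpr hc), if_pos (Subtype.ext hc)]
    · rw [if_neg (fun h => hc ((hcond z.1 z.2).mp h)),
        if_neg (fun h => hc (Subtype.ext_iff.mp h)), mul_zero]
  rw [Finset.sum_congr rfl fun z _ => step3 z, Finset.sum_ite_eq' Finset.univ]
  rw [if_pos (Finset.mem_univ _)]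
  rw [mul_comm]
  congr 1
  have h8 : μ * (ω * πinv ((lam + lam ^ 2 ^ m)⁻¹ * (μ + μ ^ 2 ^ m) ^ 2 ^ t))
      = ω * μ * πinv ((lam + lam ^ 2 ^ m)⁻¹ * (μ + μ ^ 2 ^ m) ^ 2 ^ t) := by ring
  rw [h8]
  ring


/-- Dual of the Maiorana–MacFarland type bent function
`f(x) = Tr(λ x^{2^t} π(x+x^{2^m})) + g(x+x^{2^m})` (with `λ ∉ K`):
`f*(x) = Tr(ω x π⁻¹(Λ⁻¹(x+x^{2^m})^{2^t})) + G(π⁻¹(Λ⁻¹(x+x^{2^m})^{2^t}))`, where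
`Λ = λ + λ^{2^m}`, `ω + ω^{2^m} = 1` and `G(z) = Tr(λ(ωz)^{2^t} π(z)) + g(z)`. -/
theorem statement16 {n m : ℕ} (hn : n = 2 * m) (t : ℕ)
    (π πinv : GaloisField 2 n → GaloisField 2 n)
    (hπ : Set.BijOn π {y : GaloisField 2 n | y ^ (2 ^ m) = y}
      {y : GaloisField 2 n | y ^ (2 ^ m) = y})
    (hπinv : Set.InvOn πinv π {y : GaloisField 2 n | y ^ (2 ^ m) = y}
      {y : GaloisField 2 n | y ^ (2 ^ m) = y})
    (g : GaloisField 2 n → ZMod 2)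
    (lam : GaloisField 2 n) (hlam : lam ^ (2 ^ m) ≠ lam)
    (ω : GaloisField 2 n) (hω : ω + ω ^ (2 ^ m) = 1) :
    IsBent m (fun x => Tr (lam * x ^ (2 ^ t) * π (x + x ^ (2 ^ m))) + g (x + x ^ (2 ^ m))) ∧
      IsDualOf m
        (fun x =>
          Tr (ω * x * πinv ((lam + lam ^ (2 ^ m))⁻¹ * (x + x ^ (2 ^ m)) ^ (2 ^ t))) +
            (Tr (lam * (ω * πinv ((lam + lam ^ (2 ^ m))⁻¹ * (x + x ^ (2 ^ m)) ^ (2 ^ t)))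
                  ^ (2 ^ t) *
                π (πinv ((lam + lam ^ (2 ^ m))⁻¹ * (x + x ^ (2 ^ m)) ^ (2 ^ t)))) +
              g (πinv ((lam + lam ^ (2 ^ m))⁻¹ * (x + x ^ (2 ^ m)) ^ (2 ^ t)))))
        (fun x => Tr (lam * x ^ (2 ^ t) * π (x + x ^ (2 ^ m))) + g (x + x ^ (2 ^ m))) := by
  have hm : m ≠ 0 := by
    rintro rfl
    exact hlam (by simpa using (pow_one lam))
  have hdual : IsDualOf m
      (fun x =>
        Tr (ω * x * πinv ((lam + lam ^ (2 ^ m))⁻¹ * (x + x ^ (2 ^ m)) ^ (2 ^ t))) +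
          (Tr (lam * (ω * πinv ((lam + lam ^ (2 ^ m))⁻¹ * (x + x ^ (2 ^ m)) ^ (2 ^ t)))
                ^ (2 ^ t) *
              π (πinv ((lam + lam ^ (2 ^ m))⁻¹ * (x + x ^ (2 ^ m)) ^ (2 ^ t)))) +
            g (πinv ((lam + lam ^ (2 ^ m))⁻¹ * (x + x ^ (2 ^ m)) ^ (2 ^ t)))))
      (fun x => Tr (lam * x ^ (2 ^ t) * π (x + x ^ (2 ^ m))) + g (x + x ^ (2 ^ m))) :=
    fun μ => main hn hm t π πinv hπ hπinv g lam hlam ω hω μ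
  refine ⟨fun μ => ?_, hdual⟩
  have h := hdual μ
  have hs : ∀ c : ZMod 2, sgn c = 1 ∨ sgn c = -1 := by decide
  rcases hs _ with h1 | h1 <;> rw [h1] at h
  · left; rw [h, mul_one]
  · right; rw [h]; ring
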